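/- Suppose |K| = q², α = α⁻¹ (i.e. α(x,y)² = 1 for all x,y ∈ G), and let C be a left ideal of R = K[G,Θ,α]. Then C is a Hermitian LCD code, i.e. R = C ⊕ C^{⊥_h}, if and only if there exists e ∈ R with e² = e, e equal to the adjoint of e^{(q)}, and C = Re. -/

import Mathlib

/-!
Let `τ` be an involutive automorphism of `K` commuting with `Θ(G)` (for `|K| = q²`, the
Frobenius `x ↦ x^q`), and let `σ(a)` be the adjoint of `a^{(τ)}`. As `α = α⁻¹` takes the values
`±1`, it is fixed by `τ`, and the cocycle identity gives `⟨a b, c⟩ = ⟨a, c σ(b)⟩`; with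
nondegeneracy of the form this makes `σ` an involutive anti-automorphism of `R`.

If `1 = e + f` with `e ∈ C` and `f ⊥ C`, then `f σ(c) = 0`, hence `c σ(f) = 0`, for every
`c ∈ C`, so `c = c σ(e)`; taking `c = e` gives `σ(e) = σ(e σ(e)) = e σ(e) = e`, and `C = Re`.
Conversely, for `e = e² = σ(e)` the identity `⟨r e, x⟩ = ⟨r, x e⟩` shows that `x ↦ x e` is the
orthogonal projection onto `Re`.
-/

open Finset

variable {K : Type*} {G : Type*}

/-- Multiplication of the twisted skew group ring `K[G,Θ,α]`:
`(Σ_g a_g ḡ)·(Σ_h b_h h̄) = Σ_{g,h} a_g·Θ(g)(b_h)·α(g,h)·(gh)‾`. -/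
def tsMul [Field K] [Group G] [Fintype G] [DecidableEq G]
    (Θ : G →* RingAut K) (α : G → G → Kˣ) (a b : G → K) : G → K :=
  fun x => ∑ p : G × G, if p.1 * p.2 = x then a p.1 * Θ p.1 (b p.2) * (α p.1 p.2 : K) else 0

/-- The identity element `1̄` of the twisted skew group ring. -/
def tsOne [Field K] [Group G] [DecidableEq G] : (G → K) := fun x => if x = 1 then 1 else 0

/-- The adjoint map `a ↦ â = Σ_g Θ(g⁻¹)(a_g)·α(g,g⁻¹)·(g⁻¹)‾`. -/
def tsAdj [Field K] [Group G] (Θ : G →* RingAut K) (α : G → G → Kˣ) (a : G → K) : G → K :=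
  fun x => Θ x (a x⁻¹) * (α x⁻¹ x : K)

lemma ringAut_map_apply_inv_apply [Semiring K] [Group G] (Θ : G →* RingAut K) (g : G) (x : K) :
    Θ g (Θ g⁻¹ x) = x := by
  rw [← RingAut.mul_apply, ← map_mul, mul_inv_cancel, map_one, RingAut.one_apply]

lemma RingHom.map_eq_self_of_sq_eq_one [Ring K] [NoZeroDivisors K] (τ : K →+* K) {x : K}
    (hx : x ^ 2 = 1) : τ x = x := by
  rcases sq_eq_one_iff.mp hx with rfl | rfl <;> simp

lemma FiniteField.exists_ringHom_eq_pow_of_card_eq_sq [Field K] [Fintype K] {q : ℕ}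
    (hq : Fintype.card K = q ^ 2) : ∃ τ : K →+* K, ∀ x, τ x = x ^ q := by
  obtain ⟨p, _⟩ := CharP.exists K
  obtain ⟨n, hp, hcard⟩ := FiniteField.card K p
  have : Fact p.Prime := ⟨hp⟩
  obtain ⟨k, -, rfl⟩ := (Nat.dvd_prime_pow hp).mp (hcard ▸ hq ▸ dvd_pow_self q two_ne_zero)
  exact ⟨iterateFrobenius K p k, fun x => iterateFrobenius_def p k x⟩

lemma cocycle_eq_mul_of_sq_eq_one [CommRing K] [Group G] {α : G → G → Kˣ}
    (hα : ∀ g : G, α g 1 = 1)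
    (hcoc : ∀ g₁ g₂ g₃ : G, α g₁ (g₂ * g₃) * α g₂ g₃ = α (g₁ * g₂) g₃ * α g₁ g₂)
    (hα2 : ∀ x y : G, (α x y : K) ^ 2 = 1) (g u : G) :
    (α g u : K) = α u u⁻¹ * α (g * u) u⁻¹ := by
  have h : (α u u⁻¹ : K) = α (g * u) u⁻¹ * α g u := by
    simpa [hα] using congrArg Units.val (hcoc g u u⁻¹)
  rw [h]
  linear_combination (-(α g u : K)) * hα2 (g * u) u⁻¹

section TwistedGroupRing

variable [Field K] [Group G] [Fintype G] [DecidableEq G] {Θ : G →* RingAut K} {α : G → G → Kˣ}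

lemma tsMul_apply (a b : G → K) (x : G) :
    tsMul Θ α a b x = ∑ g : G, a g * Θ g (b (g⁻¹ * x)) * (α g (g⁻¹ * x) : K) := by
  rw [tsMul, Fintype.sum_prod_type]
  refine Finset.sum_congr rfl fun g _ => ?_
  rw [Fintype.sum_eq_single (g⁻¹ * x)]
  · simp
  · intro h hh
    rw [if_neg]
    rintro rfl
    exact hh (by group)

lemma tsMul_add_right (a b c : G → K) :
    tsMul Θ α a (b + c) = tsMul Θ α a b + tsMul Θ α a c := by
  funext x
  simp only [tsMul_apply, Pi.add_apply, map_add, ← Finset.sum_add_distrib]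
  exact Finset.sum_congr rfl fun g _ => by ring

lemma tsMul_sub_left (a b c : G → K) :
    tsMul Θ α (a - b) c = tsMul Θ α a c - tsMul Θ α b c := by
  funext x
  simp only [tsMul_apply, Pi.sub_apply, ← Finset.sum_sub_distrib]
  exact Finset.sum_congr rfl fun g _ => by ring

lemma tsMul_one (hα : ∀ g : G, α g 1 = 1) (a : G → K) : tsMul Θ α a tsOne = a := by
  funext x
  rw [tsMul_apply, Fintype.sum_eq_single x]
  · simp [tsOne, hα]
  · intro g hg
    simp [tsOne, inv_mul_eq_one, hg]

lemma one_tsMul (hα : ∀ g : G, α 1 g = 1) (a : G → K) : tsMul Θ α tsOne a = a := by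
  funext x
  rw [tsMul_apply, Fintype.sum_eq_single 1]
  · simp [tsOne, hα]
  · intro g hg
    simp [tsOne, hg]

lemma tsMul_assoc
    (hcoc : ∀ g₁ g₂ g₃ : G, α g₁ (g₂ * g₃) * α g₂ g₃ = α (g₁ * g₂) g₃ * α g₁ g₂)
    (hstab : ∀ g x y : G, Θ g (α x y : K) = α x y) (a b c : G → K) :
    tsMul Θ α (tsMul Θ α a b) c = tsMul Θ α a (tsMul Θ α b c) := by
  funext x
  simp only [tsMul_apply, Finset.sum_mul, map_sum, Finset.mul_sum]
  rw [Finset.sum_comm]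
  refine Finset.sum_congr rfl fun g _ => ?_
  rw [← Equiv.sum_comp (Equiv.mulLeft g)]
  refine Finset.sum_congr rfl fun h _ => ?_
  have hy : (g * h)⁻¹ * x = h⁻¹ * (g⁻¹ * x) := by group
  have hgh : g⁻¹ * (g * h) = h := by group
  have hcoc' : (α g (g⁻¹ * x) : K) * α h (h⁻¹ * (g⁻¹ * x))
      = α (g * h) (h⁻¹ * (g⁻¹ * x)) * α g h := by
    simpa using congrArg Units.val (hcoc g h (h⁻¹ * (g⁻¹ * x)))
  simp only [Equiv.coe_mulLeft, hy, hgh, map_mul, hstab, RingAut.mul_apply]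
  linear_combination (-(a g * Θ g (b h) * Θ g (Θ h (c (h⁻¹ * (g⁻¹ * x)))))) * hcoc'

end TwistedGroupRing

def tsStar [Field K] [Group G] (Θ : G →* RingAut K) (α : G → G → Kˣ) (τ : K →+* K)
    (a : G → K) : G → K :=
  tsAdj Θ α fun g => τ (a g)

def hermForm [CommSemiring K] [Fintype G] (τ : K →+* K) (a b : G → K) : K :=
  ∑ g, a g * τ (b g)

section Star

variable [Field K] [Group G] {Θ : G →* RingAut K} {α : G → G → Kˣ} {τ : K →+* K}

lemma tsStar_apply (a : G → K) (x : G) : tsStar Θ α τ a x = Θ x (τ (a x⁻¹)) * α x⁻¹ x := rfl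

lemma tsStar_add (a b : G → K) : tsStar Θ α τ (a + b) = tsStar Θ α τ a + tsStar Θ α τ b := by
  funext x
  simp only [tsStar_apply, Pi.add_apply, map_add, add_mul]

lemma tsStar_zero : tsStar Θ α τ (0 : G → K) = 0 := by
  funext x
  simp [tsStar_apply]

lemma tsStar_one [DecidableEq G] (hα : ∀ g : G, α g 1 = 1) :
    tsStar Θ α τ (tsOne : G → K) = tsOne := by
  funext x
  by_cases hx : x = 1
  · simp [tsStar_apply, tsOne, hx, hα]
  · simp [tsStar_apply, tsOne, hx]

lemma tsStar_tsStar (hnorm : ∀ g : G, α g 1 = 1 ∧ α 1 g = 1)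
    (hcoc : ∀ g₁ g₂ g₃ : G, α g₁ (g₂ * g₃) * α g₂ g₃ = α (g₁ * g₂) g₃ * α g₁ g₂)
    (hstab : ∀ g x y : G, Θ g (α x y : K) = α x y) (hα2 : ∀ x y : G, (α x y : K) ^ 2 = 1)
    (hτ : Function.Involutive τ) (hτΘ : ∀ (g : G) (x : K), τ (Θ g x) = Θ g (τ x)) (a : G → K) :
    tsStar Θ α τ (tsStar Θ α τ a) = a := by
  funext x
  have hinv : (α x⁻¹ x : K) = α x x⁻¹ := by
    simpa [hnorm] using congrArg Units.val (hcoc x x⁻¹ x)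
  rw [tsStar_apply, tsStar_apply, inv_inv, map_mul, hτΘ, hτ, τ.map_eq_self_of_sq_eq_one (hα2 _ _),
    map_mul, hstab, ringAut_map_apply_inv_apply, hinv, mul_assoc, ← sq, hα2, mul_one]

end Star

section HermForm

variable [Field K] [Fintype G] {τ : K →+* K}

lemma hermForm_comm (hτ : Function.Involutive τ) (a b : G → K) :
    hermForm τ a b = τ (hermForm τ b a) := by
  simp only [hermForm, map_sum, map_mul, hτ _, mul_comm]

@[simp]
lemma hermForm_zero_right (a : G → K) : hermForm τ a 0 = 0 := by
  simp [hermForm]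

lemma eq_of_forall_hermForm_eq [DecidableEq G] (τ : K →+* K) {y z : G → K}
    (h : ∀ r, hermForm τ r y = hermForm τ r z) : y = z := by
  funext g
  exact τ.injective (by simpa [hermForm, Pi.single_apply] using h (Pi.single g 1))

lemma eq_zero_of_forall_hermForm_eq_zero [DecidableEq G] {y : G → K}
    (h : ∀ r, hermForm τ y r = 0) : y = 0 := by
  funext g
  simpa [hermForm, Pi.single_apply] using h (Pi.single g 1)

end HermForm

section Hermitian

variable [Field K] [Group G] [Fintype G] [DecidableEq G] {Θ : G →* RingAut K} {α : G → G → Kˣ}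
  {τ : K →+* K}

lemma hermForm_tsMul_left (hnorm : ∀ g : G, α g 1 = 1 ∧ α 1 g = 1)
    (hcoc : ∀ g₁ g₂ g₃ : G, α g₁ (g₂ * g₃) * α g₂ g₃ = α (g₁ * g₂) g₃ * α g₁ g₂)
    (hstab : ∀ g x y : G, Θ g (α x y : K) = α x y) (hα2 : ∀ x y : G, (α x y : K) ^ 2 = 1)
    (hτ : Function.Involutive τ) (hτΘ : ∀ (g : G) (x : K), τ (Θ g x) = Θ g (τ x))
    (a b c : G → K) :
    hermForm τ (tsMul Θ α a b) c = hermForm τ a (tsMul Θ α c (tsStar Θ α τ b)) := by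
  simp only [hermForm, tsMul_apply, tsStar_apply, Finset.sum_mul, map_sum, Finset.mul_sum, map_mul,
    RingAut.mul_apply, hτΘ, hτ _, τ.map_eq_self_of_sq_eq_one (hα2 _ _), hstab,
    ringAut_map_apply_inv_apply, mul_inv_rev, inv_inv]
  rw [Finset.sum_comm]
  refine Finset.sum_congr rfl fun x _ => Finset.sum_congr rfl fun g _ => ?_
  have hα : (α x (x⁻¹ * g) : K) = α (x⁻¹ * g) (g⁻¹ * x) * α g (g⁻¹ * x) := by
    simpa using cocycle_eq_mul_of_sq_eq_one (fun g => (hnorm g).1) hcoc hα2 x (x⁻¹ * g)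
  rw [hα]
  ring

lemma tsStar_tsMul (hnorm : ∀ g : G, α g 1 = 1 ∧ α 1 g = 1)
    (hcoc : ∀ g₁ g₂ g₃ : G, α g₁ (g₂ * g₃) * α g₂ g₃ = α (g₁ * g₂) g₃ * α g₁ g₂)
    (hstab : ∀ g x y : G, Θ g (α x y : K) = α x y) (hα2 : ∀ x y : G, (α x y : K) ^ 2 = 1)
    (hτ : Function.Involutive τ) (hτΘ : ∀ (g : G) (x : K), τ (Θ g x) = Θ g (τ x))
    (a b : G → K) :
    tsStar Θ α τ (tsMul Θ α a b) = tsMul Θ α (tsStar Θ α τ b) (tsStar Θ α τ a) := by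
  refine eq_of_forall_hermForm_eq τ fun r => ?_
  have hadj := hermForm_tsMul_left hnorm hcoc hstab hα2 hτ hτΘ
  have hone := one_tsMul (Θ := Θ) fun g => (hnorm g).2
  calc hermForm τ r (tsStar Θ α τ (tsMul Θ α a b))
      = hermForm τ (tsMul Θ α r (tsMul Θ α a b)) tsOne := by rw [hadj, hone]
    _ = hermForm τ (tsMul Θ α (tsMul Θ α r a) b) tsOne := by rw [tsMul_assoc hcoc hstab]
    _ = hermForm τ r (tsMul Θ α (tsStar Θ α τ b) (tsStar Θ α τ a)) := by rw [hadj, hone, hadj]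

end Hermitian

def IsHermitianLCD [Field K] [Fintype G] (τ : K →+* K) (C : Submodule K (G → K)) : Prop :=
  (∀ x ∈ C, (∀ c ∈ C, hermForm τ c x = 0) → x = 0) ∧
    ∀ x : G → K, ∃ c ∈ C, ∃ b : G → K, (∀ c' ∈ C, hermForm τ c' b = 0) ∧ x = c + b

section LCD

variable [Field K] [Group G] [Fintype G] [DecidableEq G] {Θ : G →* RingAut K} {α : G → G → Kˣ}
  {τ : K →+* K} {C : Submodule K (G → K)}

lemma tsMul_tsStar_eq_zero_of_forall_hermForm_eq_zero (hnorm : ∀ g : G, α g 1 = 1 ∧ α 1 g = 1)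
    (hcoc : ∀ g₁ g₂ g₃ : G, α g₁ (g₂ * g₃) * α g₂ g₃ = α (g₁ * g₂) g₃ * α g₁ g₂)
    (hstab : ∀ g x y : G, Θ g (α x y : K) = α x y) (hα2 : ∀ x y : G, (α x y : K) ^ 2 = 1)
    (hτ : Function.Involutive τ) (hτΘ : ∀ (g : G) (x : K), τ (Θ g x) = Θ g (τ x))
    (hC : ∀ r : G → K, ∀ c ∈ C, tsMul Θ α r c ∈ C) {f : G → K}
    (hf : ∀ c ∈ C, hermForm τ c f = 0) {c : G → K} (hc : c ∈ C) :
    tsMul Θ α c (tsStar Θ α τ f) = 0 := by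
  have hfc : tsMul Θ α f (tsStar Θ α τ c) = 0 := eq_zero_of_forall_hermForm_eq_zero fun r => by
    rw [hermForm_tsMul_left hnorm hcoc hstab hα2 hτ hτΘ, tsStar_tsStar hnorm hcoc hstab hα2 hτ hτΘ,
      hermForm_comm hτ, hf _ (hC r c hc), map_zero]
  simpa [tsStar_tsMul hnorm hcoc hstab hα2 hτ hτΘ, tsStar_tsStar hnorm hcoc hstab hα2 hτ hτΘ,
    tsStar_zero] using congrArg (tsStar Θ α τ) hfc

lemma exists_idempotent_of_isHermitianLCD (hnorm : ∀ g : G, α g 1 = 1 ∧ α 1 g = 1)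
    (hcoc : ∀ g₁ g₂ g₃ : G, α g₁ (g₂ * g₃) * α g₂ g₃ = α (g₁ * g₂) g₃ * α g₁ g₂)
    (hstab : ∀ g x y : G, Θ g (α x y : K) = α x y) (hα2 : ∀ x y : G, (α x y : K) ^ 2 = 1)
    (hτ : Function.Involutive τ) (hτΘ : ∀ (g : G) (x : K), τ (Θ g x) = Θ g (τ x))
    (hC : ∀ r : G → K, ∀ c ∈ C, tsMul Θ α r c ∈ C) (hLCD : IsHermitianLCD τ C) :
    ∃ e : G → K, tsMul Θ α e e = e ∧ tsStar Θ α τ e = e ∧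
      (C : Set (G → K)) = {x | ∃ r : G → K, x = tsMul Θ α r e} := by
  obtain ⟨e, he, f, hf, hef⟩ := hLCD.2 tsOne
  have hright : ∀ c ∈ C, tsMul Θ α c (tsStar Θ α τ e) = c := fun c hc =>
    calc tsMul Θ α c (tsStar Θ α τ e)
        = tsMul Θ α c (tsStar Θ α τ e + tsStar Θ α τ f) := by
          rw [tsMul_add_right,
            tsMul_tsStar_eq_zero_of_forall_hermForm_eq_zero hnorm hcoc hstab hα2 hτ hτΘ hC hf hc,
            add_zero]
      _ = c := by
          rw [← tsStar_add, ← hef, tsStar_one fun g => (hnorm g).1, tsMul_one fun g => (hnorm g).1]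
  have hσe : tsStar Θ α τ e = e :=
    calc tsStar Θ α τ e = tsStar Θ α τ (tsMul Θ α e (tsStar Θ α τ e)) := by rw [hright e he]
      _ = tsMul Θ α e (tsStar Θ α τ e) := by
          rw [tsStar_tsMul hnorm hcoc hstab hα2 hτ hτΘ, tsStar_tsStar hnorm hcoc hstab hα2 hτ hτΘ]
      _ = e := hright e he
  refine ⟨e, by simpa only [hσe] using hright e he, hσe, Set.ext fun x => ⟨fun hx => ⟨x, ?_⟩, ?_⟩⟩
  · rw [← hσe, hright x hx]
  · rintro ⟨r, rfl⟩
    exact hC r e he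

lemma isHermitianLCD_of_idempotent (hnorm : ∀ g : G, α g 1 = 1 ∧ α 1 g = 1)
    (hcoc : ∀ g₁ g₂ g₃ : G, α g₁ (g₂ * g₃) * α g₂ g₃ = α (g₁ * g₂) g₃ * α g₁ g₂)
    (hstab : ∀ g x y : G, Θ g (α x y : K) = α x y) (hα2 : ∀ x y : G, (α x y : K) ^ 2 = 1)
    (hτ : Function.Involutive τ) (hτΘ : ∀ (g : G) (x : K), τ (Θ g x) = Θ g (τ x))
    {e : G → K} (hee : tsMul Θ α e e = e) (hσe : tsStar Θ α τ e = e)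
    (hCe : (C : Set (G → K)) = {x | ∃ r : G → K, x = tsMul Θ α r e}) :
    IsHermitianLCD τ C := by
  have hmem : ∀ y, y ∈ C ↔ ∃ r, y = tsMul Θ α r e := fun y => by
    rw [← SetLike.mem_coe, hCe]; rfl
  have horth : ∀ r x, hermForm τ (tsMul Θ α r e) x = hermForm τ r (tsMul Θ α x e) := fun r x => by
    rw [hermForm_tsMul_left hnorm hcoc hstab hα2 hτ hτΘ, hσe]
  have hproj : ∀ r, tsMul Θ α (tsMul Θ α r e) e = tsMul Θ α r e := fun r => by
    rw [tsMul_assoc hcoc hstab, hee]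
  constructor
  · intro x hx hperp
    obtain ⟨r₀, rfl⟩ := (hmem _).1 hx
    refine eq_of_forall_hermForm_eq τ fun r => ?_
    rw [hermForm_zero_right, ← hproj, ← horth]
    exact hperp _ ((hmem _).2 ⟨r, rfl⟩)
  · intro x
    refine ⟨tsMul Θ α x e, (hmem _).2 ⟨x, rfl⟩, x - tsMul Θ α x e, ?_, by abel⟩
    intro c hc
    obtain ⟨r, rfl⟩ := (hmem c).1 hc
    rw [horth, tsMul_sub_left, hproj, sub_self, hermForm_zero_right]

theorem isHermitianLCD_iff_exists_idempotent (hnorm : ∀ g : G, α g 1 = 1 ∧ α 1 g = 1)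
    (hcoc : ∀ g₁ g₂ g₃ : G, α g₁ (g₂ * g₃) * α g₂ g₃ = α (g₁ * g₂) g₃ * α g₁ g₂)
    (hstab : ∀ g x y : G, Θ g (α x y : K) = α x y) (hα2 : ∀ x y : G, (α x y : K) ^ 2 = 1)
    (hτ : Function.Involutive τ) (hτΘ : ∀ (g : G) (x : K), τ (Θ g x) = Θ g (τ x))
    (hC : ∀ r : G → K, ∀ c ∈ C, tsMul Θ α r c ∈ C) :
    IsHermitianLCD τ C ↔ ∃ e : G → K, tsMul Θ α e e = e ∧ tsStar Θ α τ e = e ∧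
      (C : Set (G → K)) = {x | ∃ r : G → K, x = tsMul Θ α r e} :=
  ⟨exists_idempotent_of_isHermitianLCD hnorm hcoc hstab hα2 hτ hτΘ hC,
    fun ⟨_, hee, hσe, hCe⟩ => isHermitianLCD_of_idempotent hnorm hcoc hstab hα2 hτ hτΘ hee hσe hCe⟩

end LCD

/-- Suppose `|K| = q²`, `α = α⁻¹`, and let `C` be a left ideal of
`R = K[G,Θ,α]`.  Then `C` is Hermitian LCD (`R = C ⊕ C^{⊥_h}`) iff `C = Re` for some
idempotent `e` with `e² = e` and `e` equal to the adjoint of `e^{(q)}`. -/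
theorem stmt17 [Field K] [Fintype K] [Group G] [Fintype G] [DecidableEq G]
    (q : ℕ) (hq : Fintype.card K = q ^ 2)
    (Θ : G →* RingAut K) (α : G → G → Kˣ)
    (hnorm : ∀ g : G, α g 1 = 1 ∧ α 1 g = 1)
    (hcoc : ∀ g₁ g₂ g₃ : G, α g₁ (g₂ * g₃) * α g₂ g₃ = α (g₁ * g₂) g₃ * α g₁ g₂)
    (hstab : ∀ g x y : G, Θ g ((α x y : K)) = (α x y : K))
    (hα2 : ∀ x y : G, (α x y : K) ^ 2 = 1)
    (C : Submodule K (G → K))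
    (hC : ∀ r : G → K, ∀ c ∈ C, tsMul Θ α r c ∈ C) :
    ((∀ x ∈ C, (∀ c ∈ C, ∑ g : G, c g * (x g) ^ q = 0) → x = 0) ∧
     (∀ x : G → K, ∃ c ∈ C, ∃ b : G → K,
        (∀ c' ∈ C, ∑ g : G, c' g * (b g) ^ q = 0) ∧ x = c + b)) ↔
      ∃ e : G → K, tsMul Θ α e e = e ∧ tsAdj Θ α (fun g => (e g) ^ q) = e ∧
        (C : Set (G → K)) = {x | ∃ r : G → K, x = tsMul Θ α r e} := by
  obtain ⟨τ, hτq⟩ := FiniteField.exists_ringHom_eq_pow_of_card_eq_sq hq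
  have hτ : Function.Involutive τ := fun x => by
    rw [hτq, hτq, ← pow_mul, ← sq, ← hq, FiniteField.pow_card]
  have hτΘ : ∀ (g : G) (x : K), τ (Θ g x) = Θ g (τ x) := fun g x => by
    rw [hτq, hτq, map_pow]
  simpa only [IsHermitianLCD, hermForm, tsStar, hτq] using
    isHermitianLCD_iff_exists_idempotent hnorm hcoc hstab hα2 hτ hτΘ hC
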